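/- Let 1 ≤ p < 2, let a ∈ ℂ, r > 0, and let f be holomorphic on the punctured disc B(a,r) \ {a} with ∫_{B(a,r)\{a}} |f|^p dλ^2 < ∞. Then in the Laurent expansion f(z) = Σ_{j=−∞}^{∞} b_j (z−a)^j, all coefficients b_j with j ≤ −2 vanish; that is, f has at most a simple pole at a. -/

import Mathlib

open MeasureTheory ENNReal Set

noncomputable section

/-- The circular mean over `[0, 2π]` of an `EReal`-valued function, computed as the
infimum over `n : ℕ` of the means of the truncations below at `-n`. -/
def circleMeanE (g : ℝ → EReal) : EReal :=
  ⨅ n : ℕ, (((2 * Real.pi)⁻¹ *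
    ∫ θ in (0:ℝ)..(2 * Real.pi), ((g θ) ⊔ ((-(n : ℝ) : ℝ) : EReal)).toReal : ℝ) : EReal)

/-- Plurisubharmonicity of a `[-∞, ∞)`-valued function on a set `G` (subharmonicity when
`E = ℂ`): upper semicontinuous on `G`, never `+∞`, not identically `-∞`, and satisfying the
sub-mean value inequality over every circle (in any complex line) whose closed disc
lies in `G`. -/
def PSHOn {E : Type*} [NormedAddCommGroup E] [NormedSpace ℂ E]
    (φ : E → EReal) (G : Set E) : Prop :=
  UpperSemicontinuousOn φ G ∧ (∀ z ∈ G, φ z ≠ ⊤) ∧ (¬ ∀ z ∈ G, φ z = ⊥) ∧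
  ∀ z ∈ G, ∀ w : E, (∀ ζ : ℂ, ‖ζ‖ ≤ 1 → z + ζ • w ∈ G) →
    φ z ≤ circleMeanE fun θ => φ (z + Complex.exp (θ * Complex.I) • w)

/-- A set `G` is pseudoconvex if `z ↦ -log dist(z, Gᶜ)` is plurisubharmonic on `G`
(for open `G`, `dist(z, Gᶜ) = dist(z, ∂G)`). -/
def Pseudoconvex {E : Type*} [NormedAddCommGroup E] [NormedSpace ℂ E] (G : Set E) : Prop :=
  PSHOn (fun z => ((-Real.log (Metric.infDist z Gᶜ) : ℝ) : EReal)) G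

/-- `e^{-x}` for `x : EReal`, with values in `ℝ≥0∞`. -/
def expNeg (x : EReal) : ℝ≥0∞ :=
  if x = ⊥ then ⊤ else if x = ⊤ then 0 else ENNReal.ofReal (Real.exp (-x.toReal))

/-- The Lelong number `ν(φ, z) = liminf_{w → z} φ(w) / log ‖w - z‖`. -/
def lelong {E : Type*} [NormedAddCommGroup E] [NormedSpace ℂ E]
    (φ : E → EReal) (z : E) : EReal :=
  Filter.liminf (fun w => φ w / ((Real.log ‖w - z‖ : ℝ) : EReal)) (nhdsWithin z {z}ᶜ)

/-- `log⁺ t = max(0, log t)`. -/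
def logPlus (t : ℝ) : ℝ := max 0 (Real.log t)

/-- The square of the Euclidean norm on `ℂⁿ`. -/
def eNormSq {n : ℕ} (z : Fin n → ℂ) : ℝ := ∑ i, Complex.normSq (z i)

/-- The Euclidean norm on `ℂⁿ`. -/
def eNorm {n : ℕ} (z : Fin n → ℂ) : ℝ := Real.sqrt (∑ i, Complex.normSq (z i))

/-- A domain: an open connected (hence nonempty) set. -/
def DomainSet {E : Type*} [TopologicalSpace E] (G : Set E) : Prop := IsOpen G ∧ IsConnected G

/-- Membership in the (unweighted) `p`-Bergman space `A^p(Ω)`: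
`f` is holomorphic on `Ω` and `∫_Ω |f|^p dλ < ∞`. -/
def MemAp {E : Type*} [NormedAddCommGroup E] [NormedSpace ℂ E] [MeasureSpace E]
    (p : ℝ) (Ω : Set E) (f : E → ℂ) : Prop :=
  DifferentiableOn ℂ f Ω ∧ (∫⁻ z in Ω, ENNReal.ofReal (‖f z‖ ^ p)) < ⊤

/-- The Hartogs domain `D_φ(G) = {(z,w) ∈ G × ℂᴺ : ‖w‖ < e^{-φ(z)}}`,
where `ℂᴺ` carries the maximum norm. -/
def hartogsDomain {M : ℕ} (N : ℕ) (φ : (Fin M → ℂ) → EReal) (G : Set (Fin M → ℂ)) :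
    Set ((Fin M → ℂ) × (Fin N → ℂ)) :=
  {zw | zw.1 ∈ G ∧ (‖zw.2‖₊ : ℝ≥0∞) < expNeg (φ zw.1)}

/-- The Levi form (complex Hessian) of a real-valued `C²` function `φ` at `z` along `w`,
computed within the set `G` from the second real Fréchet derivative:
`Σ_{j,k} ∂²φ/∂z_j∂z̄_k(z) w_j w̄_k = (D²φ(z)[w,w] + D²φ(z)[iw,iw])/4`. -/
def leviFormWithin {E : Type*} [NormedAddCommGroup E] [NormedSpace ℂ E]
    (φ : E → ℝ) (G : Set E) (z w : E) : ℝ :=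
  (iteratedFDerivWithin ℝ 2 φ G z ![w, w]
    + iteratedFDerivWithin ℝ 2 φ G z ![Complex.I • w, Complex.I • w]) / 4

/-- The Levi form (complex Hessian) of a real-valued `C²` function `φ` at `z` along `w`:
`Σ_{j,k} ∂²φ/∂z_j∂z̄_k(z) w_j w̄_k = (D²φ(z)[w,w] + D²φ(z)[iw,iw])/4`. -/
def leviFormAt {E : Type*} [NormedAddCommGroup E] [NormedSpace ℂ E]
    (φ : E → ℝ) (z w : E) : ℝ :=
  (iteratedFDeriv ℝ 2 φ z ![w, w]
    + iteratedFDeriv ℝ 2 φ z ![Complex.I • w, Complex.I • w]) / 4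

end

/-!
Near `z ≠ a` the disc `B(z, |z - a| / 2)` avoids `a`, so the mean value property bounds
`|z - a|² |f z|` by `4/π` times the `L¹` norm of `f` on that disc (`f` is integrable near `a`
since `p ≥ 1`). These discs shrink to measure zero as `z → a`, so absolute continuity of the
integral gives `(z - a)² f z → 0`. Hence `(z - a) f z = o((z - a)⁻¹)` has a removable singularity
at `a`, and its extension `h` gives `f z = h a / (z - a) + dslope h a z`.
-/

open Metric Filter Topology Asymptotics Real

theorem setLIntegral_enorm_le_measure_add_rpow {α E : Type*} [MeasurableSpace α]
    [NormedAddCommGroup E] (μ : Measure α) (s : Set α) (f : α → E) {p : ℝ} (hp : 1 ≤ p) :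
    ∫⁻ x in s, ‖f x‖ₑ ∂μ ≤ μ s + ∫⁻ x in s, ENNReal.ofReal (‖f x‖ ^ p) ∂μ := by
  have hpointwise (x : α) : ‖f x‖ₑ ≤ 1 + ENNReal.ofReal (‖f x‖ ^ p) := by
    rw [← ofReal_norm, ← ENNReal.ofReal_one, ← ENNReal.ofReal_add zero_le_one (by positivity)]
    refine ENNReal.ofReal_le_ofReal ?_
    rcases le_or_gt ‖f x‖ 1 with h | h
    · linarith [Real.rpow_nonneg (norm_nonneg (f x)) p]
    · have := Real.rpow_le_rpow_of_exponent_le h.le hp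
      rw [Real.rpow_one] at this
      linarith
  calc ∫⁻ x in s, ‖f x‖ₑ ∂μ ≤ ∫⁻ x in s, (1 + ENNReal.ofReal (‖f x‖ ^ p)) ∂μ :=
        lintegral_mono hpointwise
    _ = μ s + ∫⁻ x in s, ENNReal.ofReal (‖f x‖ ^ p) ∂μ := by
      rw [lintegral_add_left measurable_const, setLIntegral_const, one_mul]

theorem circleMap_eq_add_polarCoord_symm (z : ℂ) (q : ℝ × ℝ) :
    circleMap z q.1 q.2 = z + Complex.polarCoord.symm q := by
  rw [Complex.polarCoord_symm_apply, circleMap, Complex.exp_mul_I]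
  push_cast
  ring

theorem setLIntegral_ball_eq_polar (z : ℂ) (R : ℝ) (g : ℂ → ℝ≥0∞) :
    ∫⁻ w in ball z R, g w =
      ∫⁻ q in Ioo 0 R ×ˢ Ioo (-π) π, ENNReal.ofReal q.1 * g (circleMap z q.1 q.2) := by
  have hmem (q : ℝ × ℝ) (hq : q ∈ Complex.polarCoord.target) :
      circleMap z q.1 q.2 ∈ ball z R ↔ q ∈ Iio R ×ˢ univ := by
    rw [mem_ball, dist_eq_norm, circleMap_sub_center, norm_circleMap_zero,
      abs_of_pos (Complex.polarCoord_target ▸ hq).1]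
    simp
  calc ∫⁻ w in ball z R, g w
      = ∫⁻ w, (ball z R).indicator g (z + w) := by
        rw [lintegral_add_left_eq_self, lintegral_indicator measurableSet_ball]
    _ = ∫⁻ q in Complex.polarCoord.target,
          (Iio R ×ˢ univ).indicator (fun q => ENNReal.ofReal q.1 * g (circleMap z q.1 q.2)) q := by
        rw [← Complex.lintegral_comp_polarCoord_symm]
        refine setLIntegral_congr_fun Complex.polarCoord.open_target.measurableSet fun q hq => ?_
        simp only [smul_eq_mul, ← circleMap_eq_add_polarCoord_symm, indicator, hmem q hq]
        split_ifs <;> simp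
    _ = _ := by
        rw [lintegral_indicator (measurableSet_Iio.prod MeasurableSet.univ),
          Measure.restrict_restrict (measurableSet_Iio.prod MeasurableSet.univ),
          Complex.polarCoord_target, prod_inter_prod, Iio_inter_Ioi, univ_inter]

theorem setLIntegral_Ioo_zero_ofReal {R : ℝ} (hR : 0 ≤ R) :
    ∫⁻ ρ in Ioo 0 R, ENNReal.ofReal ρ = ENNReal.ofReal (R ^ 2 / 2) := by
  rw [← ofReal_integral_eq_lintegral_ofReal, ← integral_Ioc_eq_integral_Ioo,
    ← intervalIntegral.integral_of_le hR, integral_id]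
  · ring_nf
  · exact continuous_id.integrableOn_Icc.mono_set Ioo_subset_Icc_self
  · exact (ae_restrict_iff' measurableSet_Ioo).2 (ae_of_all _ fun ρ hρ => hρ.1.le)

section

variable {E : Type*} [NormedAddCommGroup E] [NormedSpace ℂ E] [CompleteSpace E]

theorem two_pi_mul_enorm_le_setLIntegral_circleMap {f : ℂ → E} {z : ℂ} {ρ : ℝ} (hρ : 0 ≤ ρ)
    (hf : DiffContOnCl ℂ f (ball z ρ)) :
    ENNReal.ofReal (2 * π) * ‖f z‖ₑ ≤ ∫⁻ θ in Ioo (-π) π, ‖f (circleMap z ρ θ)‖ₑ := by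
  have hmean : (2 * π : ℝ) • f z = ∫ θ in (-π)..π, f (circleMap z ρ θ) := by
    rw [← abs_of_nonneg hρ] at hf
    rw [← hf.circleAverage, circleAverage_eq_integral_add (-π),
      smul_inv_smul₀ (by positivity), intervalIntegral.integral_comp_add_right
        (fun θ => f (circleMap z ρ θ))]
    ring_nf
  calc ENNReal.ofReal (2 * π) * ‖f z‖ₑ = ‖∫ θ in Ioc (-π) π, f (circleMap z ρ θ)‖ₑ := by
        rw [← intervalIntegral.integral_of_le (by linarith [pi_pos]), ← hmean, enorm_smul,
          Real.enorm_of_nonneg (by positivity)]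
    _ ≤ ∫⁻ θ in Ioc (-π) π, ‖f (circleMap z ρ θ)‖ₑ := enorm_integral_le_lintegral_enorm _
    _ = ∫⁻ θ in Ioo (-π) π, ‖f (circleMap z ρ θ)‖ₑ := setLIntegral_congr Ioo_ae_eq_Ioc.symm

theorem pi_mul_sq_mul_enorm_le_setLIntegral_ball {f : ℂ → E} {z : ℂ} {R : ℝ} (hR : 0 ≤ R)
    (hf : DifferentiableOn ℂ f (ball z R)) :
    ENNReal.ofReal (π * R ^ 2) * ‖f z‖ₑ ≤ ∫⁻ w in ball z R, ‖f w‖ₑ := by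
  set S := Ioo 0 R ×ˢ Ioo (-π) π
  have hS : MeasurableSet S := measurableSet_Ioo.prod measurableSet_Ioo
  have hmaps : MapsTo (fun q : ℝ × ℝ => circleMap z q.1 q.2) S (ball z R) := fun q hq => by
    rw [mem_ball, dist_eq_norm, circleMap_sub_center, norm_circleMap_zero, abs_of_pos hq.1.1]
    exact hq.1.2
  have hmeas : AEMeasurable (fun q : ℝ × ℝ => ENNReal.ofReal q.1 * ‖f (circleMap z q.1 q.2)‖ₑ)
      ((volume.restrict (Ioo 0 R)).prod (volume.restrict (Ioo (-π) π))) := by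
    rw [Measure.prod_restrict, ← Measure.volume_eq_prod]
    exact measurable_fst.ennreal_ofReal.aemeasurable.mul
      ((hf.continuousOn.comp (by fun_prop) hmaps).enorm.aemeasurable hS)
  calc ENNReal.ofReal (π * R ^ 2) * ‖f z‖ₑ
      = ∫⁻ ρ in Ioo 0 R, ENNReal.ofReal ρ * (ENNReal.ofReal (2 * π) * ‖f z‖ₑ) := by
        rw [lintegral_mul_const' _ _ (by finiteness), setLIntegral_Ioo_zero_ofReal hR, ← mul_assoc,
          ← ENNReal.ofReal_mul (by positivity)]
        ring_nf
    _ ≤ ∫⁻ ρ in Ioo 0 R, ENNReal.ofReal ρ * ∫⁻ θ in Ioo (-π) π, ‖f (circleMap z ρ θ)‖ₑ := by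
        refine setLIntegral_mono' measurableSet_Ioo fun ρ hρ => mul_le_mul_right ?_ _
        exact two_pi_mul_enorm_le_setLIntegral_circleMap hρ.1.le
          (hf.diffContOnCl_ball (closedBall_subset_ball hρ.2))
    _ = ∫⁻ q in S, ENNReal.ofReal q.1 * ‖f (circleMap z q.1 q.2)‖ₑ := by
        rw [Measure.volume_eq_prod, ← Measure.prod_restrict, lintegral_prod _ hmeas]
        simp_rw [lintegral_const_mul' _ _ ofReal_ne_top]
    _ = ∫⁻ w in ball z R, ‖f w‖ₑ := (setLIntegral_ball_eq_polar z R fun w => ‖f w‖ₑ).symm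

theorem tendsto_sub_sq_smul_nhdsNE_zero {f : ℂ → E} {a : ℂ} {r : ℝ} (hr : 0 < r)
    (hf : DifferentiableOn ℂ f (ball a r \ {a})) (hint : ∫⁻ z in ball a r \ {a}, ‖f z‖ₑ ≠ ∞) :
    Tendsto (fun z => (z - a) ^ 2 • f z) (𝓝[≠] a) (𝓝 0) := by
  set μ := volume.restrict (ball a r \ {a})
  set B : ℂ → Set ℂ := fun z => ball z (‖z - a‖ / 2)
  have hvol : Tendsto (fun z => volume (B z)) (𝓝[≠] a) (𝓝 0) := by
    simp only [B, Complex.volume_ball]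
    refine (Continuous.tendsto' ?_ a 0 (by simp)).mono_left nhdsWithin_le_nhds
    exact (ENNReal.continuous_mul_const coe_ne_top).comp
      ((ENNReal.continuous_pow 2).comp (ENNReal.continuous_ofReal.comp (by fun_prop)))
  have hsmall : Tendsto (fun z => ∫⁻ w in B z, ‖f w‖ₑ ∂μ) (𝓝[≠] a) (𝓝 0) :=
    tendsto_setLIntegral_zero hint <| tendsto_of_tendsto_of_tendsto_of_le_of_le tendsto_const_nhds
      hvol (fun _ => zero_le) fun z => Measure.restrict_apply_le _ _
  have hB : ∀ᶠ z in 𝓝[≠] a, B z ⊆ ball a r \ {a} := by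
    filter_upwards [self_mem_nhdsWithin, nhdsWithin_le_nhds (ball_mem_nhds a (half_pos hr))]
      with z hz hzr w hw
    rw [mem_ball, dist_eq_norm] at hw hzr
    have hza : 0 < ‖z - a‖ := norm_pos_iff.2 (sub_ne_zero.2 hz)
    refine ⟨?_, fun hwa => ?_⟩
    · rw [mem_ball, dist_eq_norm]
      linarith [norm_sub_le_norm_sub_add_norm_sub w z a]
    · rw [mem_singleton_iff.1 hwa, norm_sub_rev] at hw
      linarith
  have hbound : ∀ᶠ z in 𝓝[≠] a,
      ‖(z - a) ^ 2 • f z‖ₑ ≤ ENNReal.ofReal (4 / π) * ∫⁻ w in B z, ‖f w‖ₑ ∂μ := by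
    filter_upwards [hB] with z hz
    rw [Measure.restrict_restrict_of_subset hz]
    calc ‖(z - a) ^ 2 • f z‖ₑ
        = ENNReal.ofReal (4 / π) * (ENNReal.ofReal (π * (‖z - a‖ / 2) ^ 2) * ‖f z‖ₑ) := by
          rw [enorm_smul, ← mul_assoc, ← ENNReal.ofReal_mul (by positivity), ← ofReal_norm,
            norm_pow]
          congr 2
          field_simp
          ring
      _ ≤ _ := by
          gcongr
          exact pi_mul_sq_mul_enorm_le_setLIntegral_ball (by positivity) (hf.mono hz)
  rw [tendsto_zero_iff_enorm_tendsto_zero]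
  refine tendsto_of_tendsto_of_tendsto_of_le_of_le' tendsto_const_nhds ?_
    (Eventually.of_forall fun _ => zero_le) hbound
  simpa using ENNReal.Tendsto.const_mul hsmall (Or.inr ofReal_ne_top)

theorem exists_eq_inv_smul_add_of_tendsto_sub_sq_smul {f : ℂ → E} {a : ℂ} {r : ℝ} (hr : 0 < r)
    (hf : DifferentiableOn ℂ f (ball a r \ {a}))
    (hlim : Tendsto (fun z => (z - a) ^ 2 • f z) (𝓝[≠] a) (𝓝 0)) :
    ∃ (c : E) (g : ℂ → E), DifferentiableOn ℂ g (ball a r) ∧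
      ∀ z ∈ ball a r \ {a}, f z = (z - a)⁻¹ • c + g z := by
  set G : ℂ → E := fun z => (z - a) • f z
  have hG : DifferentiableOn ℂ G (ball a r \ {a}) :=
    ((differentiable_id.sub_const a).differentiableOn).smul hf
  have ho : (fun z => G z - G a) =o[𝓝[≠] a] fun z => (z - a)⁻¹ := by
    refine ((isBigO_refl (fun z => (z - a)⁻¹) _).smul_isLittleO
      ((isLittleO_one_iff ℂ).2 hlim)).congr' ?_ (by simp)
    filter_upwards [self_mem_nhdsWithin] with z hz
    simp [G, smul_smul, sq, inv_mul_cancel_left₀ (sub_ne_zero.2 hz)]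
  set h := Function.update G a (limUnder (𝓝[≠] a) G)
  have hh : DifferentiableOn ℂ h (ball a r) :=
    Complex.differentiableOn_update_limUnder_of_isLittleO (ball_mem_nhds a hr) hG ho
  refine ⟨h a, dslope h a, (Complex.differentiableOn_dslope (ball_mem_nhds a hr)).2 hh,
    fun z hz => ?_⟩
  have hza : z - a ≠ 0 := sub_ne_zero.2 hz.2
  calc f z = (z - a)⁻¹ • h z := by
        rw [show h z = G z from Function.update_of_ne hz.2 _ _, inv_smul_smul₀ hza]
    _ = (z - a)⁻¹ • (h a + (z - a) • dslope h a z) := by rw [sub_smul_dslope, add_sub_cancel]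
    _ = (z - a)⁻¹ • h a + dslope h a z := by rw [smul_add, inv_smul_smul₀ hza]

end

theorem simplePole_of_Lp_general (p : ℝ) (hp1 : 1 ≤ p) (a : ℂ) (r : ℝ) (hr : 0 < r)
    (f : ℂ → ℂ) (hf : DifferentiableOn ℂ f (Metric.ball a r \ {a}))
    (hint : (∫⁻ z in Metric.ball a r \ {a}, ENNReal.ofReal (‖f z‖ ^ p)) < ⊤) :
    ∃ (c : ℂ) (g : ℂ → ℂ), DifferentiableOn ℂ g (Metric.ball a r) ∧
      ∀ z ∈ Metric.ball a r \ {a}, f z = c / (z - a) + g z := by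
  have hL1 : ∫⁻ z in ball a r \ {a}, ‖f z‖ₑ ≠ ∞ :=
    ((setLIntegral_enorm_le_measure_add_rpow volume _ f hp1).trans_lt <| ENNReal.add_lt_top.2
      ⟨(measure_mono sdiff_subset).trans_lt measure_ball_lt_top, hint⟩).ne
  obtain ⟨c, g, hg, hfg⟩ := exists_eq_inv_smul_add_of_tendsto_sub_sq_smul hr hf
    (tendsto_sub_sq_smul_nhdsNE_zero hr hf hL1)
  exact ⟨c, g, hg, fun z hz => by rw [hfg z hz, smul_eq_mul, div_eq_inv_mul]⟩

/-- For `1 ≤ p < 2`, a holomorphic function on a punctured disc whose `p`-th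
power is integrable has at most a simple pole at the center: all Laurent coefficients `b_j`
with `j ≤ -2` vanish, i.e. `f(z) = c/(z-a) + g(z)` with `g` holomorphic on the whole disc. -/
theorem simplePole_of_Lp (p : ℝ) (hp1 : 1 ≤ p) (hp2 : p < 2) (a : ℂ) (r : ℝ) (hr : 0 < r)
    (f : ℂ → ℂ) (hf : DifferentiableOn ℂ f (Metric.ball a r \ {a}))
    (hint : (∫⁻ z in Metric.ball a r \ {a}, ENNReal.ofReal (‖f z‖ ^ p)) < ⊤) :
    ∃ (c : ℂ) (g : ℂ → ℂ), DifferentiableOn ℂ g (Metric.ball a r) ∧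
      ∀ z ∈ Metric.ball a r \ {a}, f z = c / (z - a) + g z :=
  simplePole_of_Lp_general p hp1 a r hr f hf hint
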